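/- Let T be a real trigonometric polynomial of degree at most n satisfying |T(θ)| ≤ 1 for all θ. Then for all θ, T'(θ)² + n²·T(θ)² ≤ n². -/

import Mathlib

/-!
If `T'(θ)² + n² T(θ)² > n²`, write `T(θ) = M sin ψ` and `T'(θ) = n M cos ψ` with `M > 1`. Then
`R = M sin(n · + ψ - nθ) - T` has a double zero at `θ`, and it alternates in sign at `2n + 1`
consecutive extrema of the sinusoid, where `|M sin| = M > 1 ≥ |T|`. So `R` has `2n + 1` zeros,
counted with multiplicity, in one period. But `e^{inx} R(x)` is a polynomial of degree `≤ 2n` in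
`e^{ix}`, hence `R = 0`, contradicting the alternation.
-/

open Real Finset

/-- `T` is a real trigonometric polynomial of degree at most `n`. -/
def IsTrigPolyDeg (n : ℕ) (T : ℝ → ℝ) : Prop :=
  ∃ a b : ℕ → ℝ, ∀ θ : ℝ,
    T θ = a 0 + ∑ k ∈ Finset.Icc 1 n,
      (a k * Real.cos ((k : ℝ) * θ) + b k * Real.sin ((k : ℝ) * θ))

theorem IsTrigPolyDeg.differentiable {n : ℕ} {T : ℝ → ℝ} (hT : IsTrigPolyDeg n T) :
    Differentiable ℝ T := by
  obtain ⟨a, b, hT⟩ := hT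
  rw [funext hT]
  fun_prop

theorem IsTrigPolyDeg.deriv_eq_zero {T : ℝ → ℝ} (hT : IsTrigPolyDeg 0 T) (θ : ℝ) :
    deriv T θ = 0 := by
  obtain ⟨a, b, hT⟩ := hT
  simp [funext hT]

open Complex Polynomial

theorem Polynomial.eq_zero_of_natDegree_le_card_of_isRoot_derivative {R : Type*} [CommRing R]
    [IsDomain R] {p : R[X]} {s : Finset R} {z : R} (hz : z ∈ s) (hs : ∀ x ∈ s, p.IsRoot x)
    (hd : p.derivative.IsRoot z) (hcard : p.natDegree ≤ #s) : p = 0 := by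
  classical
  by_contra hp
  obtain ⟨q, rfl⟩ : (X - C z) ^ 2 ∣ p :=
    (le_rootMultiplicity_iff hp).1 ((one_lt_rootMultiplicity_iff_isRoot hp).2 ⟨hs z hz, hd⟩)
  have hq : q ≠ 0 := right_ne_zero_of_mul hp
  rw [natDegree_mul (pow_ne_zero 2 (X_sub_C_ne_zero z)) hq, natDegree_pow, natDegree_X_sub_C]
    at hcard
  refine hq (eq_zero_of_natDegree_lt_card_of_eval_eq_zero' q (s.erase z) (fun x hx => ?_) ?_)
  · simpa [sub_eq_zero, ne_of_mem_erase hx] using hs x (mem_of_mem_erase hx)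
  · rw [card_erase_of_mem hz]; omega

def HasCircleLift (n : ℕ) (T : ℝ → ℝ) : Prop :=
  ∃ P : ℂ[X], P.natDegree ≤ 2 * n ∧
    ∀ x : ℝ, P.eval (cexp (x * I)) = cexp (n * x * I) * T x

theorem cexp_mul_I_pow (x : ℝ) (m : ℕ) : cexp (x * I) ^ m = cexp (m * x * I) := by
  rw [← Complex.exp_nat_mul]; ring_nf

theorem cexp_mul_cos_add_sin {n k : ℕ} (hk : k ≤ n) (a b x : ℝ) :
    cexp (n * x * I) * (a * Real.cos (k * x) + b * Real.sin (k * x)) =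
      (a - b * I) / 2 * cexp (x * I) ^ (n + k) + (a + b * I) / 2 * cexp (x * I) ^ (n - k) := by
  have hpow (m : ℕ) (t : ℝ) (ht : (m : ℝ) = n + t) :
      cexp (x * I) ^ m = cexp (n * x * I) * cexp (t * x * I) := by
    rw [cexp_mul_I_pow, ← Complex.exp_add, ← ofReal_natCast, ht]; push_cast; ring_nf
  rw [hpow (n + k) k (by push_cast; ring),
    hpow (n - k) (-k) (by push_cast [Nat.cast_sub hk]; ring)]
  push_cast
  rw [Complex.cos, Complex.sin]
  ring_nf

theorem IsTrigPolyDeg.hasCircleLift {n : ℕ} {T : ℝ → ℝ} (hT : IsTrigPolyDeg n T) :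
    HasCircleLift n T := by
  obtain ⟨a, b, hT⟩ := hT
  refine ⟨C (a 0 : ℂ) * X ^ n + ∑ k ∈ Icc 1 n,
      (C ((a k - b k * I) / 2) * X ^ (n + k) + C ((a k + b k * I) / 2) * X ^ (n - k)), ?_, ?_⟩
  · refine (natDegree_add_le _ _).trans (max_le ((natDegree_C_mul_X_pow_le _ _).trans (by omega))
      (natDegree_sum_le_of_forall_le _ _ fun k hk => (natDegree_add_le _ _).trans (max_le ?_ ?_)))
    all_goals exact (natDegree_C_mul_X_pow_le _ _).trans (by grind)
  · intro x
    simp only [eval_add, eval_mul, eval_C, eval_X, eval_pow, eval_finsetSum, hT x]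
    push_cast
    rw [mul_add, mul_sum, cexp_mul_I_pow, mul_comm]
    congr 1
    refine sum_congr rfl fun k hk => ?_
    exact_mod_cast (cexp_mul_cos_add_sin (mem_Icc.1 hk).2 (a k) (b k) x).symm

theorem HasCircleLift.sub {n : ℕ} {S T : ℝ → ℝ} (hS : HasCircleLift n S)
    (hT : HasCircleLift n T) :
    HasCircleLift n (fun x => S x - T x) := by
  obtain ⟨P, hPdeg, hP⟩ := hS
  obtain ⟨Q, hQdeg, hQ⟩ := hT
  refine ⟨P - Q, (natDegree_sub_le _ _).trans (max_le hPdeg hQdeg), fun x => ?_⟩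
  rw [eval_sub, hP, hQ]
  push_cast
  ring

theorem hasCircleLift_mul_sin (n : ℕ) (M φ : ℝ) :
    HasCircleLift n (fun x => M * Real.sin (n * x + φ)) := by
  refine ⟨C (M * cexp (φ * I) / (2 * I)) * X ^ (2 * n) - C (M * cexp (-φ * I) / (2 * I)),
    (natDegree_sub_le _ _).trans (max_le (natDegree_C_mul_X_pow_le _ _) (by simp)), fun x => ?_⟩
  simp only [eval_sub, eval_mul, eval_C, eval_pow, eval_X, cexp_mul_I_pow]
  push_cast
  rw [Complex.sin]
  have h₁ :
      cexp (φ * I) * cexp (2 * n * x * I) = cexp (n * x * I) * cexp ((n * x + φ) * I) := by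
    rw [← Complex.exp_add, ← Complex.exp_add]; ring_nf
  have h₂ : cexp (-φ * I) = cexp (n * x * I) * cexp (-(n * x + φ) * I) := by
    rw [← Complex.exp_add]; ring_nf
  simp only [div_eq_mul_inv, mul_inv, inv_I]
  linear_combination (-(M * I / 2)) * h₁ + (M * I / 2) * h₂

theorem isRoot_derivative_of_hasCircleLift {n : ℕ} {R : ℝ → ℝ} {P : ℂ[X]}
    (hP : ∀ x : ℝ, P.eval (cexp (x * I)) = cexp (n * x * I) * R x) {x₀ : ℝ} (h₀ : R x₀ = 0)
    (hd : HasDerivAt R 0 x₀) : P.derivative.IsRoot (cexp (x₀ * I)) := by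
  have hexp (c : ℂ) :
      HasDerivAt (fun x : ℝ => cexp (c * x * I)) (cexp (c * x₀ * I) * (c * I)) x₀ := by
    simpa using (((hasDerivAt_id (x₀ : ℂ)).const_mul c).mul_const I).cexp.comp_ofReal
  have hlhs : HasDerivAt (fun x : ℝ => P.eval (cexp (x * I)))
      (P.derivative.eval (cexp (x₀ * I)) * (cexp (x₀ * I) * I)) x₀ := by
    simpa [Function.comp_def] using (P.hasDerivAt _).comp x₀ (hexp 1)
  have hrhs : HasDerivAt (fun x : ℝ => P.eval (cexp (x * I))) 0 x₀ := by
    simpa [hP, h₀] using (hexp n).fun_mul hd.ofReal_comp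
  simpa [IsRoot, Complex.exp_ne_zero, I_ne_zero] using hlhs.unique hrhs

theorem HasCircleLift.eq_zero_of_card_zeros_le {n : ℕ} {R : ℝ → ℝ} (hR : HasCircleLift n R)
    {a x₀ : ℝ} {s : Finset ℝ} (hsub : ↑s ⊆ Set.Ico a (a + 2 * π)) (hs : ∀ x ∈ s, R x = 0)
    (hx₀ : x₀ ∈ s) (hd : HasDerivAt R 0 x₀) (hcard : 2 * n ≤ #s) (x : ℝ) : R x = 0 := by
  classical
  obtain ⟨P, hPdeg, hP⟩ := hR
  have hinj : Set.InjOn (fun x : ℝ => cexp (x * I)) s := fun x hx y hy hxy =>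
    Circle.exp_injOn_Ico (by linarith) (hsub hx) (hsub hy) (Circle.ext hxy)
  have hP0 : P = 0 := by
    refine eq_zero_of_natDegree_le_card_of_isRoot_derivative
      (s := s.image (fun x : ℝ => cexp (x * I))) (mem_image_of_mem _ hx₀) ?_
      (isRoot_derivative_of_hasCircleLift hP (hs x₀ hx₀) hd) ?_
    · simp +contextual [IsRoot, hP, hs]
    · rw [card_image_of_injOn hinj]; omega
  simpa [hP0, Complex.exp_ne_zero] using (hP x).symm

theorem exists_mem_Ioo_eq_zero_of_mul_neg {f : ℝ → ℝ} (hf : Continuous f) {a b : ℝ}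
    (hab : a ≤ b) (h : f a * f b < 0) : ∃ c ∈ Set.Ioo a b, f c = 0 := by
  rcases lt_or_gt_of_ne (left_ne_zero_of_mul h.ne) with ha | ha
  · exact intermediate_value_Ioo hab hf.continuousOn ⟨ha, by nlinarith⟩
  · exact intermediate_value_Ioo' hab hf.continuousOn ⟨by nlinarith, ha⟩

theorem exists_finset_zeros_of_sign_changes {f : ℝ → ℝ} (hf : Continuous f) {w : ℕ → ℝ}
    (hw : Monotone w) (hsign : ∀ j, f (w j) * f (w (j + 1)) < 0) {x₀ : ℝ}
    (hx₀ : x₀ ∈ Set.Ioo (w 0) (w 1)) (h0 : f x₀ = 0) {m : ℕ} (hm : 1 ≤ m) :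
    ∃ s : Finset ℝ, x₀ ∈ s ∧ ↑s ⊆ Set.Ioo (w 0) (w m) ∧ #s = m ∧ ∀ x ∈ s, f x = 0 := by
  induction m, hm using Nat.le_induction with
  | base => exact ⟨{x₀}, mem_singleton_self _, by simpa using hx₀, rfl, by simpa using h0⟩
  | succ m _ ih =>
    obtain ⟨s, hx₀s, hsub, hcard, hzero⟩ := ih
    obtain ⟨ζ, hζ, hfζ⟩ := exists_mem_Ioo_eq_zero_of_mul_neg hf (hw m.le_succ) (hsign m)
    have hζs : ζ ∉ s := fun h => (hsub h).2.not_gt hζ.1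
    refine ⟨insert ζ s, mem_insert_of_mem hx₀s, ?_, by rw [card_insert_of_notMem hζs, hcard],
      by simpa [hfζ] using hzero⟩
    rw [coe_insert, Set.insert_subset_iff]
    exact ⟨⟨(hsub hx₀s).1.trans ((hsub hx₀s).2.trans hζ.1), hζ.2⟩,
      hsub.trans (Set.Ioo_subset_Ioo_right (hw m.le_succ))⟩

theorem exists_sin_extremal_points {n : ℕ} (hn : 0 < n) (φ θ : ℝ) :
    ∃ w : ℕ → ℝ, StrictMono w ∧ w (2 * n) = w 0 + 2 * π ∧ θ ∈ Set.Ico (w 0) (w 1) ∧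
      ∀ j, Real.sin (n * w j + φ) ^ 2 = 1 ∧
        Real.sin (n * w (j + 1) + φ) = -Real.sin (n * w j + φ) := by
  have hn' : (0 : ℝ) < n := by exact_mod_cast hn
  set k := ⌊(n * θ + φ - π / 2) / π⌋
  set w : ℕ → ℝ := fun j => (π / 2 + (k + j) * π - φ) / n
  have hphase (j : ℕ) : n * w j + φ = π / 2 + (k + j) * π := by
    simp only [w]; field_simp; ring
  refine ⟨w, strictMono_nat_of_lt_succ fun j => ?_, ?_, ⟨?_, ?_⟩, fun j => ⟨?_, ?_⟩⟩
  · simp only [w]; gcongr; linarith [pi_pos]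
  · simp only [w]; field_simp; push_cast; ring
  · have := Int.floor_le ((n * θ + φ - π / 2) / π)
    rw [le_div_iff₀ pi_pos] at this
    rw [← mul_le_mul_iff_right₀ hn', ← add_le_add_iff_right φ, hphase]
    push_cast; linarith
  · have := Int.lt_floor_add_one ((n * θ + φ - π / 2) / π)
    rw [div_lt_iff₀ pi_pos] at this
    rw [← mul_lt_mul_iff_right₀ hn', ← add_lt_add_iff_right φ, hphase]
    push_cast; linarith
  · have hcos : Real.cos (n * w j + φ) = 0 :=
      Real.cos_eq_zero_iff.2 ⟨k + j, by rw [hphase]; push_cast; ring⟩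
    nlinarith [Real.sin_sq_add_cos_sq (n * w j + φ)]
  · rw [hphase, hphase, ← Real.sin_add_pi]; push_cast; ring_nf

theorem mul_sub_mul_neg_sub_lt_zero {M σ a b : ℝ} (hM : 1 < M) (hσ : σ ^ 2 = 1) (ha : |a| ≤ 1)
    (hb : |b| ≤ 1) : (M * σ - a) * (M * -σ - b) < 0 := by
  have ha' := (sq_le_one_iff_abs_le_one a).2 ha
  have hb' := (sq_le_one_iff_abs_le_one b).2 hb
  have h₁ : 0 < M - a * σ := by nlinarith [sq_nonneg (a - σ)]
  have h₂ : 0 < M + b * σ := by nlinarith [sq_nonneg (b + σ)]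
  calc (M * σ - a) * (M * -σ - b) = -((M - a * σ) * (M + b * σ)) := by
        linear_combination (-(M ^ 2 + a * b)) * hσ
    _ < 0 := neg_neg_of_pos (mul_pos h₁ h₂)

theorem exists_polar (a b : ℝ) :
    ∃ r ψ : ℝ, 0 ≤ r ∧ r ^ 2 = a ^ 2 + b ^ 2 ∧ r * Real.cos ψ = a ∧ r * Real.sin ψ = b :=
  ⟨‖(a + b * I : ℂ)‖, arg (a + b * I), norm_nonneg _,
    by rw [Complex.sq_norm, normSq_add_mul_I], by simp [norm_mul_cos_arg],
    by simp [norm_mul_sin_arg]⟩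

theorem IsTrigPolyDeg.le_one_of_osculating_sin {n : ℕ} (hn : 0 < n) {T : ℝ → ℝ}
    (hT : IsTrigPolyDeg n T) (hb : ∀ x, |T x| ≤ 1) {M ψ θ : ℝ} (hsin : M * Real.sin ψ = T θ)
    (hcos : n * (M * Real.cos ψ) = deriv T θ) : M ≤ 1 := by
  by_contra! hM
  set φ := ψ - n * θ with hφ
  set R : ℝ → ℝ := fun x => M * Real.sin (n * x + φ) - T x
  have hRθ : R θ = 0 := by simp [R, φ, hsin]
  have hR'θ : HasDerivAt R 0 θ := by
    have hphase : HasDerivAt (fun x : ℝ => n * x + φ) n θ := by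
      simpa using ((hasDerivAt_id θ).const_mul (n : ℝ)).add_const φ
    have h := (hphase.sin.const_mul M).fun_sub (hT.differentiable θ).hasDerivAt
    rwa [show n * θ + φ = ψ by rw [hφ]; ring, ← hcos,
      show M * (Real.cos ψ * n) - n * (M * Real.cos ψ) = 0 by ring] at h
  obtain ⟨w, hw, hperiod, hθw, hext⟩ := exists_sin_extremal_points hn φ θ
  have hsign (j : ℕ) : R (w j) * R (w (j + 1)) < 0 := by
    obtain ⟨hsq, hneg⟩ := hext j
    simpa only [R, hneg] using mul_sub_mul_neg_sub_lt_zero hM hsq (hb (w j)) (hb (w (j + 1)))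
  have hθw' : θ ∈ Set.Ioo (w 0) (w 1) :=
    ⟨hθw.1.lt_of_ne fun h => left_ne_zero_of_mul (hsign 0).ne (h ▸ hRθ), hθw.2⟩
  have hRcont : Continuous R := by
    have := hT.differentiable.continuous
    fun_prop
  obtain ⟨s, hθs, hsub, hcard, hzero⟩ :=
    exists_finset_zeros_of_sign_changes hRcont hw.monotone hsign hθw' hRθ (m := 2 * n) (by omega)
  have hR0 := ((hasCircleLift_mul_sin n M φ).sub hT.hasCircleLift).eq_zero_of_card_zeros_le
    (hsub.trans (by rw [hperiod]; exact Set.Ioo_subset_Ico_self)) hzero hθs hR'θ hcard.ge (w 0)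
  exact left_ne_zero_of_mul (hsign 0).ne hR0

theorem stmt9 (n : ℕ) (T : ℝ → ℝ) (hT : IsTrigPolyDeg n T)
    (hb : ∀ θ : ℝ, |T θ| ≤ 1) (θ : ℝ) :
    (deriv T θ) ^ 2 + (n : ℝ) ^ 2 * (T θ) ^ 2 ≤ (n : ℝ) ^ 2 := by
  rcases n.eq_zero_or_pos with rfl | hn
  · simp [hT.deriv_eq_zero θ]
  have hn' : (0 : ℝ) < n := by exact_mod_cast hn
  obtain ⟨M, ψ, hM0, hM2, hcos, hsin⟩ := exists_polar (deriv T θ / n) (T θ)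
  have hM : M ≤ 1 :=
    hT.le_one_of_osculating_sin hn hb hsin (by rw [hcos, mul_div_cancel₀ _ hn'.ne'])
  have hsq : (deriv T θ / n) ^ 2 + T θ ^ 2 ≤ 1 := by nlinarith
  rw [div_pow, div_add' _ _ _ (by positivity), div_le_one (by positivity)] at hsq
  linarith
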